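/- arXiv:1404.3494 — 2 statements merged into one kernel-verified Lean document; each statement's English description precedes it below -/
import Mathlib

section
/- For each c ∈ {1, 3, 5, 11, 29}, the Legendre-like polynomial F(n) = 2n² + c is recursively-factorable. -/
/-!
If `2 n² > c`, let `p` be the factor of `F(n) = 2 n² + c` of smaller absolute value, so
`p² ≤ F(n)`. The least absolute residue `r` of `n` modulo `p` satisfies
`4 r² ≤ p² ≤ 2 n² + c < 4 n²`, hence `F(r) < F(n)`. If `2 n² ≤ c`, then for the listed `c`
the value `F(n)` is `1` or prime, so it has no factorization with both factors `≠ ±1`.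
-/

/-- A polynomial `F` with integer coefficients (here given by its value function) is
*recursively-factorable* if for every `n ∈ ℤ` and all integers `p, q` with `F(n) = p·q`,
`|p| ≠ 1` and `|q| ≠ 1`, there exists `r ∈ ℤ` with `|F(r)| < |F(n)|` and `r ≡ n (mod |p|)`
or `r ≡ n (mod |q|)` (congruence mod 0 meaning equality, which is exactly divisibility of
`r - n` by `p` resp. `q`). -/
def RecursivelyFactorable (F : ℤ → ℤ) : Prop :=
  ∀ n p q : ℤ, F n = p * q → |p| ≠ 1 → |q| ≠ 1 →
    ∃ r : ℤ, |F r| < |F n| ∧ (p ∣ (r - n) ∨ q ∣ (r - n))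

lemma Int.exists_dvd_sub_four_mul_sq_le (n : ℤ) {m : ℤ} (hm : m ≠ 0) :
    ∃ r : ℤ, m ∣ r - n ∧ 4 * r ^ 2 ≤ m ^ 2 := by
  have hpos : 0 < m.natAbs := Int.natAbs_pos.mpr hm
  refine ⟨Int.bmod n m.natAbs, Int.natAbs_dvd.mp Int.dvd_bmod_sub_self, ?_⟩
  have hlow : -((m.natAbs : ℤ) / 2) ≤ Int.bmod n m.natAbs := Int.le_bmod hpos
  have hup : Int.bmod n m.natAbs < ((m.natAbs : ℤ) + 1) / 2 := Int.bmod_lt hpos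
  have habs : |2 * Int.bmod n m.natAbs| ≤ |m| := by
    rw [Int.abs_eq_natAbs m, abs_le]
    constructor <;> omega
  calc 4 * Int.bmod n m.natAbs ^ 2 = (2 * Int.bmod n m.natAbs) ^ 2 := by ring
    _ ≤ m ^ 2 := sq_le_sq.mpr habs

lemma exists_two_mul_sq_add_lt_of_eq_mul {c n p q : ℤ} (hc : 0 ≤ c) (hn : c < 2 * n ^ 2)
    (hF : 2 * n ^ 2 + c = p * q) (hpq : |p| ≤ |q|) (hp : p ≠ 0) :
    ∃ r : ℤ, |2 * r ^ 2 + c| < |2 * n ^ 2 + c| ∧ p ∣ r - n := by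
  obtain ⟨r, hdvd, hr⟩ := Int.exists_dvd_sub_four_mul_sq_le n hp
  refine ⟨r, ?_, hdvd⟩
  have hFpos : 0 < 2 * n ^ 2 + c := by linarith
  have hsq : p ^ 2 ≤ 2 * n ^ 2 + c := by
    calc p ^ 2 = |p| * |p| := by rw [← abs_mul, abs_mul_self, sq]
      _ ≤ |p| * |q| := mul_le_mul_of_nonneg_left hpq (abs_nonneg p)
      _ = 2 * n ^ 2 + c := by rw [← abs_mul, ← hF, abs_of_pos hFpos]
  rw [abs_of_pos hFpos, abs_of_nonneg (by positivity)]
  linarith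

lemma isUnit_or_isUnit_of_eq_one_or_prime {M : Type*} [CommMonoidWithZero M] [IsCancelMulZero M]
    {x p q : M} (hx : x = 1 ∨ Prime x) (h : x = p * q) : IsUnit p ∨ IsUnit q := by
  rcases hx with rfl | hx
  · exact .inl (IsUnit.of_mul_eq_one q h.symm)
  · exact hx.irreducible.isUnit_or_isUnit h

theorem recursivelyFactorable_two_mul_sq_add {c : ℤ} (hc : 0 ≤ c)
    (hsmall : ∀ n : ℤ, 2 * n ^ 2 ≤ c → 2 * n ^ 2 + c = 1 ∨ Prime (2 * n ^ 2 + c)) :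
    RecursivelyFactorable (fun n : ℤ => 2 * n ^ 2 + c) := by
  intro n p q hF hp hq
  simp only at hF ⊢
  rcases le_or_gt (2 * n ^ 2) c with hn | hn
  · rcases isUnit_or_isUnit_of_eq_one_or_prime (hsmall n hn) hF with hunit | hunit
    · exact absurd (Int.isUnit_iff_abs_eq.mp hunit) hp
    · exact absurd (Int.isUnit_iff_abs_eq.mp hunit) hq
  have hpq0 : p * q ≠ 0 := by rw [← hF]; linarith
  rcases le_total |p| |q| with hpq | hqp
  · obtain ⟨r, hlt, hdvd⟩ :=
      exists_two_mul_sq_add_lt_of_eq_mul hc hn hF hpq (left_ne_zero_of_mul hpq0)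
    exact ⟨r, hlt, .inl hdvd⟩
  · obtain ⟨r, hlt, hdvd⟩ := exists_two_mul_sq_add_lt_of_eq_mul hc hn
      (hF.trans (mul_comm p q)) hqp (right_ne_zero_of_mul hpq0)
    exact ⟨r, hlt, .inr hdvd⟩

/-- For each `c ∈ {1, 3, 5, 11, 29}`, the polynomial `F(n) = 2 * n ^ 2 + c` is
recursively-factorable. -/
theorem stmt_7 :
    ∀ c : ℤ, c ∈ ({1, 3, 5, 11, 29} : Set ℤ) →
      RecursivelyFactorable (fun n : ℤ => 2 * n ^ 2 + c) := by
  intro c hc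
  simp only [Set.mem_insert_iff, Set.mem_singleton_iff] at hc
  rcases hc with rfl | rfl | rfl | rfl | rfl <;>
    refine recursivelyFactorable_two_mul_sq_add (by norm_num) fun n hn => ?_ <;>
    · have hlow : -4 ≤ n := by nlinarith
      have hup : n ≤ 4 := by nlinarith
      interval_cases n <;> revert hn <;> norm_num
end

section
/- For each c ∈ {2, 3, 5}, the polynomial F(n) = 4n² + 4n + c is recursively-factorable. -/
theorem exists_dvd_sub_abs_two_mul_add_one_le (n p : ℤ) (hp : p ≠ 0) :
    ∃ r, p ∣ r - n ∧ |2 * r + 1| ≤ |p| := by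
  have h2p : 0 < 2 * |p| := by positivity
  -- with `r = n - k|p|` we get `2r + 1 = (2n + 1 + |p|) % (2|p|) - |p| ∈ [-|p|, |p|)`
  set k := (2 * n + 1 + |p|) / (2 * |p|)
  have hmod := Int.emod_def (2 * n + 1 + |p|) (2 * |p|)
  have hlo := Int.emod_nonneg (2 * n + 1 + |p|) h2p.ne'
  have hhi := Int.emod_lt_of_pos (2 * n + 1 + |p|) h2p
  refine ⟨n - k * |p|, ?_, abs_le.mpr ⟨by linarith, by linarith⟩⟩
  rw [show n - k * |p| - n = -k * |p| by ring]
  exact (self_dvd_abs p).mul_left _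

theorem four_mul_sq_add_four_mul_add_pos {c : ℤ} (hc : 1 ≤ c) (n : ℤ) :
    0 < 4 * n ^ 2 + 4 * n + c := by
  rcases le_or_gt 0 n with hn | hn <;> nlinarith

theorem exists_lt_of_eq_mul_of_le_abs_of_abs_lt {c n p q : ℤ} (hc : 1 ≤ c)
    (h : 4 * n ^ 2 + 4 * n + c = p * q) (hcp : c ≤ |p|) (hpq : |p| < |q|) :
    ∃ r, |4 * r ^ 2 + 4 * r + c| < |4 * n ^ 2 + 4 * n + c| ∧ p ∣ r - n := by
  obtain ⟨r, hdvd, hr⟩ := exists_dvd_sub_abs_two_mul_add_one_le n p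
    (abs_pos.mp (by linarith))
  refine ⟨r, ?_, hdvd⟩
  have hsq : (2 * r + 1) ^ 2 ≤ |p| ^ 2 := sq_le_sq.mpr (by rwa [abs_abs])
  rw [abs_of_pos (four_mul_sq_add_four_mul_add_pos hc r), h, abs_mul]
  calc 4 * r ^ 2 + 4 * r + c = (2 * r + 1) ^ 2 + (c - 1) := by ring
    _ < |p| ^ 2 + |p| := by linarith
    _ = |p| * (|p| + 1) := by ring
    _ ≤ |p| * |q| := by gcongr; linarith

theorem recursivelyFactorable_four_mul_sq_add_four_mul_add {c : ℤ} (hc : 1 ≤ c)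
    (hsq : ∀ n m : ℤ, 4 * n ^ 2 + 4 * n + c ≠ m ^ 2)
    (hdvd : ∀ n d : ℤ, 2 ≤ d → d ∣ 4 * n ^ 2 + 4 * n + c → c ≤ d) :
    RecursivelyFactorable (fun n : ℤ => 4 * n ^ 2 + 4 * n + c) := by
  intro n p q h hp hq
  beta_reduce at h
  have hpos := four_mul_sq_add_four_mul_add_pos hc n
  have habs : 4 * n ^ 2 + 4 * n + c = |p| * |q| := by
    rw [← abs_mul, ← h, abs_of_pos hpos]
  have hp2 : 2 ≤ |p| := by
    have := abs_pos.mpr (left_ne_zero_of_mul (h ▸ hpos.ne'))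
    omega
  have hq2 : 2 ≤ |q| := by
    have := abs_pos.mpr (right_ne_zero_of_mul (h ▸ hpos.ne'))
    omega
  have hne : |p| ≠ |q| := fun heq => hsq n |p| (by rw [habs, heq, sq])
  wlog hlt : |p| < |q| generalizing p q
  · obtain ⟨r, hr, hqr⟩ := this q p (by rw [h, mul_comm]) hq hp (by rw [habs, mul_comm])
      hq2 hp2 hne.symm (lt_of_le_of_ne (not_lt.mp hlt) hne.symm)
    exact ⟨r, hr, hqr.symm⟩
  obtain ⟨r, hr, hpr⟩ := exists_lt_of_eq_mul_of_le_abs_of_abs_lt hc h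
    (hdvd n |p| hp2 ((abs_dvd p _).mpr ⟨q, h⟩)) hlt
  exact ⟨r, hr, Or.inl hpr⟩

theorem four_mul_sq_add_four_mul_add_ne_sq {c : ℤ} (hc : c ∈ ({2, 3, 5} : Set ℤ)) (n m : ℤ) :
    4 * n ^ 2 + 4 * n + c ≠ m ^ 2 := by
  intro h
  have h8 := congrArg (Int.cast : ℤ → ZMod 8) h
  push_cast at h8
  generalize (n : ZMod 8) = x, (m : ZMod 8) = y at h8
  rcases hc with rfl | rfl | rfl <;> revert x y <;> decide

theorem le_of_dvd_four_mul_sq_add_four_mul_add {c : ℤ} (hc : c ∈ ({2, 3, 5} : Set ℤ))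
    (n d : ℤ) (hd : 2 ≤ d) (hdvd : d ∣ 4 * n ^ 2 + 4 * n + c) : c ≤ d := by
  by_contra! hlt
  lift d to ℕ using by omega
  have hz := (ZMod.intCast_zmod_eq_zero_iff_dvd _ d).mpr hdvd
  push_cast at hz
  generalize (n : ZMod d) = x at hz
  revert x
  rcases hc with rfl | rfl | rfl <;>
  · norm_cast at hd hlt
    interval_cases d <;> decide

/-- For each `c ∈ {2, 3, 5}`, the polynomial `F(n) = 4 * n ^ 2 + 4 * n + c` is
recursively-factorable. -/
theorem stmt_11 :
    ∀ c : ℤ, c ∈ ({2, 3, 5} : Set ℤ) →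
      RecursivelyFactorable (fun n : ℤ => 4 * n ^ 2 + 4 * n + c) := by
  intro c hc
  have hc1 : 1 ≤ c := by rcases hc with rfl | rfl | rfl <;> norm_num
  exact recursivelyFactorable_four_mul_sq_add_four_mul_add hc1
    (four_mul_sq_add_four_mul_add_ne_sq hc) (le_of_dvd_four_mul_sq_add_four_mul_add hc)
end
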